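/- arXiv:1705.02065 — 2 statements merged into one kernel-verified Lean document; each statement's English description precedes it below -/
import Mathlib

section
/- For any permutation w ∈ S_n, the map (i,j) ↦ (i − r_w(i,j), j) is a bijection from the Rothe diagram D(w) onto the top pipe dream T_w, defined as the transpose of the bottom pipe dream of w⁻¹: T_w := {(i,j) : (j,i) ∈ B_{w⁻¹}}. -/
/-!
Fix a column `j`. For a cell `(i, j)` of the Rothe diagram we have `w i > j`, so among the `i`
rows `k < i` exactly `r_w(i, j)` satisfy `w k ≤ j`; the others satisfy `w k > j` and, since
`k < i < w⁻¹ j`, they are precisely the diagram cells above `(i, j)`. Thus `i - r_w(i, j)` is the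
rank of `i` in column `j` of the diagram, and this column has `m_j(w⁻¹)` cells.
-/

open Finset

/-- The Rothe diagram of a permutation (0-based coordinates). -/
def Rothe {n : ℕ} (w : Equiv.Perm (Fin n)) : Finset (Fin n × Fin n) :=
  Finset.univ.filter (fun p => p.2 < w p.1 ∧ p.1 < w⁻¹ p.2)

/-- The rank function r_w(i,j) = #{k : k ≤ i and w(k) ≤ j}. -/
def rk {n : ℕ} (w : Equiv.Perm (Fin n)) (i j : Fin n) : ℕ :=
  (Finset.univ.filter (fun k => k ≤ i ∧ w k ≤ j)).card

/-- m_i(w) = #{j : j > i and w(j) < w(i)}. -/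
def mrow {n : ℕ} (w : Equiv.Perm (Fin n)) (i : Fin n) : ℕ :=
  (Finset.univ.filter (fun j => i < j ∧ w j < w i)).card

/-- The set of 132-patterns of w. -/
def P132 {n : ℕ} (w : Equiv.Perm (Fin n)) : Finset (Fin n × Fin n × Fin n) :=
  Finset.univ.filter
    (fun t => t.1 < t.2.1 ∧ t.2.1 < t.2.2 ∧ w t.1 < w t.2.2 ∧ w t.2.2 < w t.2.1)

theorem Finset.bijOn_card_filter_lt {α : Type*} [LinearOrder α] (s : Finset α) :
    Set.BijOn (fun a => #(s.filter (· < a))) s (Set.Iio #s) := by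
  have hmono : StrictMonoOn (fun a => #(s.filter (· < a))) s := by
    intro a ha b _ hab
    refine card_lt_card ⟨fun x hx => ?_, fun hsub => ?_⟩
    · simp only [mem_filter] at hx ⊢
      exact ⟨hx.1, hx.2.trans hab⟩
    · simpa using hsub (mem_filter.2 ⟨ha, hab⟩)
  have hmaps : Set.MapsTo (fun a => #(s.filter (· < a))) s (range #s) := fun a ha =>
    mem_range.2 <| card_lt_card <| filter_ssubset.2 ⟨a, ha, lt_irrefl a⟩
  rw [← coe_range]
  exact ⟨hmaps, hmono.injOn, surjOn_of_injOn_of_card_le _ hmaps hmono.injOn (card_range _).le⟩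

theorem Set.bijOn_of_forall_bijOn_fiber {α β γ δ : Type*} {e : β → δ} (he : e.Injective)
    {g : β → α → γ} {S : β → Set α} {T : β → Set γ} (h : ∀ b, Set.BijOn (g b) (S b) (T b)) :
    Set.BijOn (fun p : α × β => (g p.2 p.1, e p.2)) {p | p.1 ∈ S p.2}
      {q | ∃ b, q.2 = e b ∧ q.1 ∈ T b} := by
  refine ⟨fun p hp => ⟨p.2, rfl, (h p.2).mapsTo hp⟩, ?_, ?_⟩
  · rintro ⟨a, b⟩ ha ⟨a', b'⟩ ha' hab
    simp only [Prod.mk.injEq] at hab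
    obtain rfl : b = b' := he hab.2
    exact Prod.ext ((h b).injOn (x₁ := a) ha ha' hab.1) rfl
  · rintro ⟨c, d⟩ ⟨b, rfl, hc⟩
    obtain ⟨a, ha, rfl⟩ := (h b).surjOn hc
    exact ⟨(a, b), ha, rfl⟩

section Rothe

variable {n : ℕ} (w : Equiv.Perm (Fin n))

def rotheColumn (j : Fin n) : Finset (Fin n) :=
  univ.filter fun i => (i, j) ∈ Rothe w

theorem mem_rotheColumn {i j : Fin n} : i ∈ rotheColumn w j ↔ (i, j) ∈ Rothe w := by
  simp [rotheColumn]

theorem card_rotheColumn (j : Fin n) : #(rotheColumn w j) = mrow w⁻¹ j := by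
  refine card_bij' (fun i _ => w i) (fun k _ => w⁻¹ k) ?_ ?_ (by simp) (by simp) <;>
    simp [rotheColumn, Rothe]

theorem sub_rk_eq_card_rotheColumn_filter_lt {i j : Fin n} (hij : (i, j) ∈ Rothe w) :
    (i : ℕ) - rk w i j = #((rotheColumn w j).filter (· < i)) := by
  simp only [Rothe, mem_filter, mem_univ, true_and] at hij
  have hrk : rk w i j = #(univ.filter fun k => k < i ∧ w k ≤ j) := by
    refine congrArg card (filter_congr fun k _ => ?_)
    exact ⟨fun h => ⟨h.1.lt_of_ne (by rintro rfl; exact absurd h.2 hij.1.not_ge), h.2⟩,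
      fun h => ⟨h.1.le, h.2⟩⟩
  have habove : (rotheColumn w j).filter (· < i) = univ.filter fun k => k < i ∧ ¬w k ≤ j := by
    ext k
    simp only [rotheColumn, Rothe, mem_filter, mem_univ, true_and, not_le]
    exact ⟨fun h => ⟨h.2, h.1.1⟩, fun h => ⟨⟨h.2, h.1.trans hij.2⟩, h.1⟩⟩
  have hsplit := card_filter_add_card_filter_not (s := univ.filter (· < i)) fun k => w k ≤ j
  simp only [filter_filter] at hsplit
  have hrows : #(univ.filter (· < i)) = i := by rw [filter_gt_eq_Iio, Fin.card_Iio]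
  rw [hrk, habove]
  omega

end Rothe

/-- The map (i,j) ↦ (i − r_w(i,j), j) is a bijection from the Rothe diagram
onto the top pipe dream T_w, the transpose of B_{w⁻¹}. -/
theorem stmt5 {n : ℕ} (w : Equiv.Perm (Fin n)) :
    Set.BijOn (fun p : Fin n × Fin n => ((p.1 : ℕ) - rk w p.1 p.2, (p.2 : ℕ)))
      (↑(Rothe w))
      {q : ℕ × ℕ | ∃ j : Fin n, q.2 = (j : ℕ) ∧ q.1 < mrow w⁻¹ j} := by
  have hbij := Set.bijOn_of_forall_bijOn_fiber Fin.val_injective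
    fun j => (rotheColumn w j).bijOn_card_filter_lt
  have hsource : {p : Fin n × Fin n | p.1 ∈ (rotheColumn w p.2 : Set (Fin n))} = Rothe w := by
    ext p
    simp [mem_rotheColumn]
  simp only [hsource, Set.mem_Iio, card_rotheColumn] at hbij
  exact hbij.congr fun p hp => by
    rw [sub_rk_eq_card_rotheColumn_filter_lt w (by exact_mod_cast hp)]
end

section
/- Let w ∈ S_n, let (i,j) ∈ D(w), and let j_1 < j_2 < … < j_m enumerate {j' : (i,j') ∈ D(w)}. Then for each ℓ, j_ℓ − r_w(i, j_ℓ) = ℓ. In particular, j − r_w(i,j) = #{j' ≤ j : (i,j') ∈ D(w)}. -/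
/-
The columns `j' ≤ j` of row `i` that are not cells of `D(w)` are exactly those with
`w⁻¹ j' ≤ i`, because `j' ≤ j < w i` holds throughout; so `w⁻¹` maps them bijectively onto
`{k ≤ i | w k ≤ j}`, a set of size `r_w(i,j)`. The remaining `j + 1 - r_w(i,j)` columns
`j' ≤ j` are the cells of row `i`.
-/

open Finset

variable {n : ℕ} (w : Equiv.Perm (Fin n))

theorem mem_Rothe {i j : Fin n} : (i, j) ∈ Rothe w ↔ j < w i ∧ i < w⁻¹ j := by
  simp [Rothe]

theorem rk_eq_card_not_mem_Rothe {i j : Fin n} (hj : j < w i) :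
    rk w i j = #{j' | j' ≤ j ∧ (i, j') ∉ Rothe w} := by
  refine card_bij' (fun k _ => w k) (fun j' _ => w⁻¹ j') ?_ ?_ (by simp) (by simp)
  · intro k hk
    simp only [mem_filter, mem_univ, true_and, mem_Rothe, not_and, not_lt] at hk ⊢
    exact ⟨hk.2, fun _ => by simpa using hk.1⟩
  · intro j' hj'
    simp only [mem_filter, mem_univ, true_and, mem_Rothe, not_and, not_lt] at hj' ⊢
    exact ⟨hj'.2 (hj'.1.trans_lt hj), by simpa using hj'.1⟩

theorem card_filter_le_add_card_filter_le_not (p : Fin n → Prop) [DecidablePred p] (j : Fin n) :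
    #{j' | j' ≤ j ∧ p j'} + #{j' | j' ≤ j ∧ ¬p j'} = j + 1 := by
  rw [← filter_filter, ← filter_filter, card_filter_add_card_filter_not,
    filter_ge_eq_Iic, Fin.card_Iic]

-- Indices are 0-based, so the paper's `j - r_w(i,j)` reads `j + 1 - rk w i j` here.
/-- For (i,j) ∈ D(w), the column position after left-justification,
j − r_w(i,j) (1-based: (j₀+1) − r), equals the number of diagram cells
in row i with column index ≤ j; this is the content of the enumeration claim
j_ℓ − r_w(i,j_ℓ) = ℓ. -/
theorem stmt10 {n : ℕ} (w : Equiv.Perm (Fin n)) (i j : Fin n)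
    (h : (i, j) ∈ Rothe w) :
    (j : ℕ) + 1 - rk w i j =
      (Finset.univ.filter (fun j' => j' ≤ j ∧ (i, j') ∈ Rothe w)).card := by
  have hrk := rk_eq_card_not_mem_Rothe w ((mem_Rothe w).1 h).1
  have hsplit := card_filter_le_add_card_filter_le_not (fun j' => (i, j') ∈ Rothe w) j
  omega
end
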